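/- arXiv:1509.05542 — 3 statements merged into one kernel-verified Lean document; each statement's English description precedes it below -/
import Mathlib

section
/- Let X and Y be topological spaces with countable dense subsets D_X ⊆ X and D_Y ⊆ Y, let Z be a topological space, and let f : X × Y → Z be separately continuous (i.e., for each x the map y ↦ f(x,y) is continuous, and for each y the map x ↦ f(x,y) is continuous). If the image f(X × Y) is a discrete subspace of Z, then f(X × Y) = f(D_X × D_Y); in particular f(X × Y) is countable. -/
open Set

theorem Dense.range_eq_image_of_discreteTopology {Y Z : Type*} [TopologicalSpace Y]
    [TopologicalSpace Z] {D : Set Y} (hD : Dense D) {g : Y → Z} (hg : Continuous g)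
    [DiscreteTopology (range g)] : range g = g '' D := by
  refine (image_subset_range g D).antisymm' ?_
  rintro _ ⟨y, rfl⟩
  have hfiber : IsOpen (g ⁻¹' {g y}) := by
    simpa [Set.preimage, Subtype.ext_iff] using
      hg.rangeFactorization.isOpen_preimage _ (isOpen_discrete {rangeFactorization g y})
  obtain ⟨y', hy'D, hy'⟩ := hD.exists_mem_open hfiber ⟨y, rfl⟩
  exact ⟨y', hy'D, hy'⟩

/-- Every slice of `f` has range inside `range f`, hence discrete, so `y` and then `x` can be moved
into the dense sets without changing the value of `f`. -/
theorem range_eq_image_prod_of_separatelyContinuous {X Y Z : Type*} [TopologicalSpace X]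
    [TopologicalSpace Y] [TopologicalSpace Z] {DX : Set X} {DY : Set Y} (hDX : Dense DX)
    (hDY : Dense DY) {f : X × Y → Z} (hfx : ∀ x, Continuous fun y => f (x, y))
    (hfy : ∀ y, Continuous fun x => f (x, y)) [hdisc : DiscreteTopology (range f)] :
    range f = f '' (DX ×ˢ DY) := by
  refine (image_subset_range f _).antisymm' ?_
  rintro _ ⟨⟨x, y⟩, rfl⟩
  obtain ⟨y', hy'D, hy'⟩ : f (x, y) ∈ (fun y => f (x, y)) '' DY := by
    have := hdisc.of_subset (range_subset_iff.2 fun y => mem_range_self (x, y))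
    rw [← hDY.range_eq_image_of_discreteTopology (hfx x)]
    exact mem_range_self y
  obtain ⟨x', hx'D, hx'⟩ : f (x, y') ∈ (fun x => f (x, y')) '' DX := by
    have := hdisc.of_subset (range_subset_iff.2 fun x => mem_range_self (x, y'))
    rw [← hDX.range_eq_image_of_discreteTopology (hfy y')]
    exact mem_range_self x
  exact ⟨(x', y'), ⟨hx'D, hy'D⟩, hx'.trans hy'⟩

theorem stmt0 {X Y Z : Type*} [TopologicalSpace X] [TopologicalSpace Y] [TopologicalSpace Z]
    (DX : Set X) (DY : Set Y) (hDXc : DX.Countable) (hDYc : DY.Countable)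
    (hDXd : Dense DX) (hDYd : Dense DY)
    (f : X × Y → Z)
    (hfx : ∀ x : X, Continuous fun y : Y => f (x, y))
    (hfy : ∀ y : Y, Continuous fun x : X => f (x, y))
    (hdisc : DiscreteTopology ↥(Set.range f)) :
    Set.range f = f '' (DX ×ˢ DY) ∧ (Set.range f).Countable := by
  have hrange := range_eq_image_prod_of_separatelyContinuous hDXd hDYd hfx hfy
  exact ⟨hrange, hrange ▸ (hDXc.prod hDYc).image f⟩
end

section
/- Let X, Y, Z be topological spaces and f : X × Y → Z separately continuous with discrete image. For an open set V ⊆ Y and z ∈ Z, the set {x ∈ X : f({x} × V) ⊆ {z}} equals {x ∈ X : f({x} × closure(V)) ⊆ {z}}. -/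
/-- No separation axiom on `Z` is needed: the fibre is the preimage of a subset of the discrete
space `S`, and every such subset is closed. -/
theorem Continuous.isClosed_preimage_singleton_of_discreteTopology {Y Z : Type*}
    [TopologicalSpace Y] [TopologicalSpace Z] {g : Y → Z} (hg : Continuous g) {S : Set Z}
    [DiscreteTopology S] (hgS : ∀ y, g y ∈ S) (z : Z) : IsClosed (g ⁻¹' {z}) :=
  (isClosed_discrete (Subtype.val ⁻¹' {z} : Set S)).preimage (hg.codRestrict hgS)

theorem stmt2_general {X Y Z : Type*} [TopologicalSpace X] [TopologicalSpace Y] [TopologicalSpace Z]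
    (f : X × Y → Z)
    (hfx : ∀ x : X, Continuous fun y : Y => f (x, y))
    (hdisc : DiscreteTopology ↥(Set.range f))
    (V : Set Y) (z : Z) :
    {x : X | ∀ y ∈ V, f (x, y) = z} = {x : X | ∀ y ∈ closure V, f (x, y) = z} := by
  ext x
  have hfiber : IsClosed ((fun y => f (x, y)) ⁻¹' {z}) :=
    (hfx x).isClosed_preimage_singleton_of_discreteTopology (S := Set.range f)
      (fun y => ⟨(x, y), rfl⟩) z
  exact ⟨fun h => closure_minimal h hfiber, fun h y hy => h y (subset_closure hy)⟩

theorem stmt2 {X Y Z : Type*} [TopologicalSpace X] [TopologicalSpace Y] [TopologicalSpace Z]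
    (f : X × Y → Z)
    (hfx : ∀ x : X, Continuous fun y : Y => f (x, y))
    (hfy : ∀ y : Y, Continuous fun x : X => f (x, y))
    (hdisc : DiscreteTopology ↥(Set.range f))
    (V : Set Y) (hV : IsOpen V) (z : Z) :
    {x : X | ∀ y ∈ V, f (x, y) = z} = {x : X | ∀ y ∈ closure V, f (x, y) = z} :=
  stmt2_general f hfx hdisc V z
end

section
/- Let Z be a separately continuous image setting: if X and Y are separable topological spaces, Z a topological space, and f : X × Y → Z is separately continuous, then the image f(X × Y) is separable. -/
open Set TopologicalSpace

section SeparatelyContinuous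

variable {X Y Z : Type*} [TopologicalSpace X] [TopologicalSpace Y] [TopologicalSpace Z]
  {f : X × Y → Z}

/-- Approximate first the second coordinate with the first fixed in `s`, then the first
coordinate with the second fixed. -/
theorem image_closure_prod_subset_closure_image_prod
    (hfx : ∀ x : X, Continuous fun y : Y => f (x, y))
    (hfy : ∀ y : Y, Continuous fun x : X => f (x, y)) (s : Set X) (t : Set Y) :
    f '' (closure s ×ˢ closure t) ⊆ closure (f '' (s ×ˢ t)) := by
  rintro _ ⟨⟨x, y⟩, ⟨hx, hy⟩, rfl⟩
  have h_slice : (fun d => f (d, y)) '' s ⊆ closure (f '' (s ×ˢ t)) := by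
    rintro _ ⟨d, hd, rfl⟩
    refine closure_mono ?_ (image_closure_subset_closure_image (hfx d) ⟨y, hy, rfl⟩)
    rintro _ ⟨e, he, rfl⟩
    exact ⟨(d, e), ⟨hd, he⟩, rfl⟩
  exact closure_minimal h_slice isClosed_closure
    (image_closure_subset_closure_image (hfy y) ⟨x, hx, rfl⟩)

theorem range_subset_closure_image_prod_of_dense
    (hfx : ∀ x : X, Continuous fun y : Y => f (x, y))
    (hfy : ∀ y : Y, Continuous fun x : X => f (x, y)) {s : Set X} {t : Set Y}
    (hs : Dense s) (ht : Dense t) :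
    range f ⊆ closure (f '' (s ×ˢ t)) := by
  simpa [hs.closure_eq, ht.closure_eq] using
    image_closure_prod_subset_closure_image_prod hfx hfy s t

end SeparatelyContinuous

theorem stmt3 {X Y Z : Type*} [TopologicalSpace X] [TopologicalSpace Y] [TopologicalSpace Z]
    [TopologicalSpace.SeparableSpace X] [TopologicalSpace.SeparableSpace Y]
    (f : X × Y → Z)
    (hfx : ∀ x : X, Continuous fun y : Y => f (x, y))
    (hfy : ∀ y : Y, Continuous fun x : X => f (x, y)) :
    TopologicalSpace.IsSeparable (Set.range f) := by
  obtain ⟨u, hu_countable, hu_dense⟩ := exists_countable_dense X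
  obtain ⟨v, hv_countable, hv_dense⟩ := exists_countable_dense Y
  exact ⟨f '' (u ×ˢ v), (hu_countable.prod hv_countable).image f,
    range_subset_closure_image_prod_of_dense hfx hfy hu_dense hv_dense⟩
end
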